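/- Let T be a saturated dg-category over k with a perfect t-structure cogenerated by a point system P of dimension d. Then every object x ∈ P belongs to the heart H of the induced t-structure on [T]. -/

import Mathlib

/-!
Statement 0 (Toën–Vaquié, "Systèmes de points dans les dg-catégories saturées",
Proposition 2.3 (1)):

Let `T` be a triangulated dg-category over an algebraically closed field `k` of
characteristic zero, equipped with a compact t-structure.  Then for every pair of
integers `a ≤ b`, the full sub-dg-category `T̂^{[a,b]} ⊆ T̂` is stable under filtered
colimits, and the cohomology functors `H^i_t : |T̂| → Ĥ` commute with filtered colimits.

We model the (∞-category underlying the) dg-category `T̂` of `T^op`-dg-modules by a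
`k`-linear pretriangulated category `C` with all colimits; the full subcategory of
compact objects models `T`.  A t-structure on `T` is a t-structure on `C = [T̂]`
(Mathlib's `Triangulated.TStructure`), which we equip with truncation functors and the
associated cohomology functors `H^i_t`.
-/

open CategoryTheory Limits Pretriangulated Triangulated

universe v u

namespace TV

variable {C : Type u} [Category.{v} C]

/-- An object `x` of a category is compact (ω-small) if `Hom(x, -)` commutes with all
filtered colimits. -/
def IsCompactObj (x : C) : Prop :=
  ∀ (J : Type v) [SmallCategory J] [IsFiltered J] (F : J ⥤ C) (c : Cocone F),
    IsColimit c → Nonempty (IsColimit ((coyoneda.obj (Opposite.op x)).mapCocone c))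

variable [Preadditive C] [HasZeroObject C] [HasShift C ℤ]
  [∀ (n : ℤ), (shiftFunctor C n).Additive] [Pretriangulated C]

/-- Truncation data for a t-structure: truncation functors `τ_{≤n}`, `τ_{≥n}` together
with the canonical morphisms and the associated distinguished triangles
`τ_{≤n} x ⟶ x ⟶ τ_{≥n+1} x ⟶ (τ_{≤n} x)[1]`. -/
structure Truncation (t : TStructure C) where
  truncLE (n : ℤ) : C ⥤ C
  truncGE (n : ℤ) : C ⥤ C
  truncLE_le (n : ℤ) (x : C) : t.le n ((truncLE n).obj x)
  truncGE_ge (n : ℤ) (x : C) : t.ge n ((truncGE n).obj x)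
  ι (n : ℤ) : truncLE n ⟶ 𝟭 C
  π (n : ℤ) : 𝟭 C ⟶ truncGE n
  δ (n : ℤ) (x : C) : (truncGE (n + 1)).obj x ⟶ ((truncLE n).obj x)⟦(1 : ℤ)⟧
  triangle_mem (n : ℤ) (x : C) :
    Triangle.mk ((ι n).app x) ((π (n + 1)).app x) (δ n x) ∈ distTriang C

/-- The cohomology functor `H^i_t := τ_{≤i} τ_{≥i} (-)[i]` associated to a t-structure
with truncations; it takes values in the heart `Ĥ`. -/
def Truncation.H {t : TStructure C} (tr : Truncation t) (i : ℤ) : C ⥤ C :=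
  tr.truncGE i ⋙ tr.truncLE i ⋙ shiftFunctor C i

/-- A t-structure (with truncations) is *compact* (Définition 2.2) if it is bounded
(compact objects have bounded amplitude), precompact (truncations preserve compact
objects), and the positive part `T̂^{≥0}` is stable under filtered colimits. -/
structure IsCompactTStructure (t : TStructure C) (tr : Truncation t) : Prop where
  bounded : ∀ x : C, IsCompactObj x → ∃ a b : ℤ, a ≤ b ∧ t.ge a x ∧ t.le b x
  precompact_le : ∀ (x : C) (n : ℤ), IsCompactObj x → IsCompactObj ((tr.truncLE n).obj x)
  precompact_ge : ∀ (x : C) (n : ℤ), IsCompactObj x → IsCompactObj ((tr.truncGE n).obj x)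
  ge_stable : ∀ (J : Type v) [SmallCategory J] [IsFiltered J] (F : J ⥤ C) (c : Cocone F),
    IsColimit c → (∀ j : J, t.ge 0 (F.obj j)) → t.ge 0 c.pt

variable (k : Type u) [Field k]

/-- Composition of shifted endomorphisms
`Hom(x, x[i]) ⊗ Hom(x, x[j]) ⟶ Hom(x, x[i+j])` (the product in the Ext-algebra). -/
def selfComp {x : C} {i j : ℤ} (f : x ⟶ x⟦i⟧) (g : x ⟶ x⟦j⟧) (l : ℤ) (h : j + i = l) :
    x ⟶ x⟦l⟧ :=
  f ≫ (shiftFunctor C i).map g ≫ ((shiftFunctorAdd' C j i l h).inv.app x)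

/-- A Serre functor for the saturated dg-category `T` of compact objects of `T̂`:
an autoequivalence with `k`-linear Serre duality on compact objects. -/
structure SerreOnCompacts [Linear k C] where
  S : C ⥤ C
  isEquivalence : S.IsEquivalence
  preserves_compact : ∀ x : C, IsCompactObj x → IsCompactObj (S.obj x)
  duality : ∀ x y : C, IsCompactObj x → IsCompactObj y →
    Nonempty ((y ⟶ S.obj x) ≃ₗ[k] ((x ⟶ y) →ₗ[k] k))

/-- A *point object of dimension `d`* (Définition 5.1): a compact object with vanishing
negative self-Exts, whose Ext-algebra is free graded-commutative on `Ext¹(x,x)` placed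
in degree one (`T(x,x) ≃ Sym_k(Ext¹(x,x)[-1])`, the exterior algebra on `Ext¹(x,x)`),
with `dim_k Ext¹(x,x) = d` and `S(x) ≅ x[d]`. -/
structure IsPointObject [Linear k C] (sd : SerreOnCompacts k (C := C)) (d : ℕ) (x : C) :
    Prop where
  compact : IsCompactObj x
  neg_ext : ∀ i : ℤ, i < 0 → ∀ f : x ⟶ x⟦i⟧, f = 0
  sym_ext_algebra :
    ∃ e : ∀ i : ℕ, (x ⟶ x⟦(i : ℤ)⟧) ≃ₗ[k] (⋀[k]^i (x ⟶ x⟦(1 : ℤ)⟧)),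
      ∀ (i j : ℕ) (f : x ⟶ x⟦(i : ℤ)⟧) (g : x ⟶ x⟦(j : ℤ)⟧),
        ((e (i + j) (selfComp f g ((i + j : ℕ) : ℤ) (by push_cast; ring)) :
            ⋀[k]^(i + j) (x ⟶ x⟦(1 : ℤ)⟧)) : ExteriorAlgebra k (x ⟶ x⟦(1 : ℤ)⟧)) =
          ((e i f : ⋀[k]^i (x ⟶ x⟦(1 : ℤ)⟧)) : ExteriorAlgebra k (x ⟶ x⟦(1 : ℤ)⟧)) *
          ((e j g : ⋀[k]^j (x ⟶ x⟦(1 : ℤ)⟧)) : ExteriorAlgebra k (x ⟶ x⟦(1 : ℤ)⟧))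
  dim_ext_one : Module.finrank k (x ⟶ x⟦(1 : ℤ)⟧) = d
  serre : Nonempty (sd.S.obj x ≅ x⟦(d : ℤ)⟧)

/-- A *point system of dimension `d`* (Définition 5.2) in the saturated dg-category `T`
of compact objects: a class of point objects of dimension `d`, pairwise orthogonal,
detecting the zero objects among compact objects. -/
structure IsPointSystem [Linear k C] (sd : SerreOnCompacts k (C := C)) (d : ℕ)
    (P : Set C) : Prop where
  point : ∀ x ∈ P, IsPointObject k sd d x
  orthogonal : ∀ x ∈ P, ∀ y ∈ P, ¬ Nonempty (x ≅ y) →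
    ∀ (i : ℤ) (f : x ⟶ y⟦i⟧), f = 0
  detect : ∀ E : C, IsCompactObj E →
    (IsZero E ↔ ∀ x ∈ P, ∀ (i : ℤ) (f : E ⟶ x⟦i⟧), f = 0)

/-- Monomorphisms in the heart `Ĥ` of a t-structure (viewed as a full subcategory). -/
def MonoInHeart (t : TStructure C) {x y : C} (f : x ⟶ y) : Prop :=
  ∀ z : C, t.le 0 z → t.ge 0 z → ∀ g h : z ⟶ x, g ≫ f = h ≫ f → g = h

/-- The heart `Ĥ` is noetherian: every subobject (in `Ĥ`) of an ω-small object is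
ω-small. -/
def NoetherianHeart (t : TStructure C) : Prop :=
  ∀ (x y : C) (f : x ⟶ y), (t.le 0 x ∧ t.ge 0 x) → (t.le 0 y ∧ t.ge 0 y) →
    MonoInHeart t f → IsCompactObj y → IsCompactObj x

/-- The point system `P` *cogenerates* the t-structure (Définition 5.4 (1)):
`E ∈ T^{≤0}` iff `H^i(T(E,x)) = 0` for all `x ∈ P` and all `i < 0`. -/
def Cogenerates (t : TStructure C) (P : Set C) : Prop :=
  ∀ E : C, IsCompactObj E →
    (t.le 0 E ↔ ∀ x ∈ P, ∀ i : ℤ, i < 0 → ∀ f : E ⟶ x⟦i⟧, f = 0)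

end TV

/-
Negative Exts between points vanish (for a point itself because its Ext-algebra is
concentrated in nonnegative degrees, between two distinct points by orthogonality), so
cogeneration puts every `x ∈ P` in `T^{≤0}`.  For `T^{≥0}`, the truncation
`K = τ_{≤-1} x` is compact and `K[-1] ∈ T^{≤0}`, so cogeneration kills `K ⟶ x`; a
truncation triangle whose first map vanishes has `K = 0`, whence `x ≃ τ_{≥0} x`.
-/

namespace TV

section

variable {C : Type u} [Category.{v} C] [HasShift C ℤ]

lemma IsCompactObj.shift {x : C} (h : IsCompactObj x) (n : ℤ) : IsCompactObj (x⟦n⟧) := by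
  intro J _ _ F c hc
  let adj : shiftFunctor C n ⊣ shiftFunctor C (-n) := (shiftEquiv C n).toAdjunction
  have hc' : IsColimit ((shiftFunctor C (-n)).mapCocone c) := isColimitOfPreserves _ hc
  obtain ⟨h₂⟩ := h J (F ⋙ shiftFunctor C (-n)) ((shiftFunctor C (-n)).mapCocone c) hc'
  let γ : coyoneda.obj (Opposite.op (x⟦n⟧)) ≅
      shiftFunctor C (-n) ⋙ coyoneda.obj (Opposite.op x) :=
    NatIso.ofComponents (fun y => Equiv.toIso (adj.homEquiv x y))
      (fun g => by
        ext f
        exact adj.homEquiv_naturality_right f g)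
  refine ⟨(IsColimit.equivOfNatIsoOfIso (Functor.isoWhiskerLeft F γ)
      ((coyoneda.obj (Opposite.op (x⟦n⟧))).mapCocone c)
      ((coyoneda.obj (Opposite.op x)).mapCocone ((shiftFunctor C (-n)).mapCocone c))
      ?_).symm h₂⟩
  refine Cocone.ext (Equiv.toIso (adj.homEquiv x c.pt)) (fun j => ?_)
  ext f
  show (adj.homEquiv x c.pt) (((adj.homEquiv x (F.obj j)).symm f) ≫ c.ι.app j) =
    f ≫ (shiftFunctor C (-n)).map (c.ι.app j)
  rw [adj.homEquiv_naturality_right, Equiv.apply_symm_apply]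

variable [Preadditive C] {k : Type u} [Field k] [Linear k C]

lemma IsPointSystem.hom_shift_eq_zero_of_neg {sd : SerreOnCompacts k (C := C)}
    {d : ℕ} {P : Set C} (hP : IsPointSystem k sd d P) {x y : C} (hx : x ∈ P) (hy : y ∈ P)
    {i : ℤ} (hi : i < 0) (f : x ⟶ y⟦i⟧) : f = 0 := by
  by_cases hxy : Nonempty (x ≅ y)
  · obtain ⟨e⟩ := hxy
    have hf : f = (f ≫ (shiftFunctor C i).map e.inv) ≫ (shiftFunctor C i).map e.hom := by
      simp [← Functor.map_comp]
    rw [hf, (hP.point x hx).neg_ext i hi (f ≫ (shiftFunctor C i).map e.inv), zero_comp]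
  · exact hP.orthogonal x hx y hy hxy i f

end

variable {C : Type u} [Category.{v} C] [Preadditive C] [HasZeroObject C] [HasShift C ℤ]
  [∀ (n : ℤ), (shiftFunctor C n).Additive] [Pretriangulated C]

namespace Truncation

variable {t : TStructure C} (tr : Truncation t)

lemma isZero_truncLE_of_ι_app_eq_zero {n : ℤ} {x : C} (h : (tr.ι n).app x = 0) :
    IsZero ((tr.truncLE n).obj x) := by
  have hT := inv_rot_of_distTriang _ (tr.triangle_mem n x)
  obtain ⟨g, hg⟩ := Triangle.coyoneda_exact₂ _ hT (𝟙 ((tr.truncLE n).obj x))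
    (by change 𝟙 _ ≫ (tr.ι n).app x = 0; rw [h, comp_zero])
  -- `𝟙` factors through `(τ_{≥n+1} x)[-1]`, which lies in degrees `≥ n + 2`
  have hg0 : g = 0 := t.zero_of_isLE_of_isGE g n (n + 2) (by lia) ⟨tr.truncLE_le n x⟩
    ⟨t.ge_shift (n + 1) (-1) (n + 2) (by lia) _ (tr.truncGE_ge (n + 1) x)⟩
  rw [IsZero.iff_id_eq_zero, hg, hg0]
  exact zero_comp

lemma ge_of_isZero_truncLE {n : ℤ} {x : C} (h : IsZero ((tr.truncLE n).obj x)) :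
    t.ge (n + 1) x := by
  have : IsIso ((tr.π (n + 1)).app x) :=
    (Triangle.isZero₁_iff_isIso₂ _ (tr.triangle_mem n x)).1 h
  exact (t.ge (n + 1)).prop_of_iso (asIso ((tr.π (n + 1)).app x)).symm
    (tr.truncGE_ge (n + 1) x)

end Truncation

section

variable {k : Type u} [Field k]

lemma IsPointSystem.le_zero_of_cogenerates [Linear k C] {sd : SerreOnCompacts k (C := C)}
    {d : ℕ} {P : Set C} (hP : IsPointSystem k sd d P) {t : TStructure C}
    (hcog : Cogenerates t P) {x : C} (hx : x ∈ P) : t.le 0 x :=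
  (hcog x (hP.point x hx).compact).2 fun _ hy _ hi f => hP.hom_shift_eq_zero_of_neg hx hy hi f

end

namespace Cogenerates

variable {t : TStructure C} {P : Set C}

lemma hom_eq_zero_of_le_neg_one (hcog : Cogenerates t P) {E : C} (hE : IsCompactObj E)
    (hle : t.le (-1) E) {x : C} (hx : x ∈ P) (f : E ⟶ x) : f = 0 := by
  have hE' : t.le 0 (E⟦(-1 : ℤ)⟧) := t.le_shift (-1) (-1) 0 (by lia) _ hle
  apply (shiftFunctor C (-1 : ℤ)).map_injective
  rw [(hcog _ (hE.shift (-1))).1 hE' x hx (-1) (by lia)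
    ((shiftFunctor C (-1 : ℤ)).map f), Functor.map_zero]

lemma ge_zero_of_mem (hcog : Cogenerates t P) (tr : Truncation t) {x : C} (hx : x ∈ P)
    (hK : IsCompactObj ((tr.truncLE (-1)).obj x)) : t.ge 0 x := by
  have hι : (tr.ι (-1)).app x = 0 :=
    hcog.hom_eq_zero_of_le_neg_one hK (tr.truncLE_le (-1) x) hx _
  simpa using tr.ge_of_isZero_truncLE (tr.isZero_truncLE_of_ι_app_eq_zero hι)

end Cogenerates

variable (k : Type u) [Field k]

theorem point_objects_in_heart
    [Linear k C]
    (sd : SerreOnCompacts k (C := C))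
    -- a perfect t-structure: compact, with noetherian heart
    (t : TStructure C) (tr : Truncation t)
    (hperf₁ : IsCompactTStructure t tr)
    -- a point system of dimension `d` cogenerating the t-structure
    (d : ℕ) (P : Set C) (hP : IsPointSystem k sd d P)
    (hcog : Cogenerates t P) :
    ∀ x ∈ P, t.le 0 x ∧ t.ge 0 x := by
  intro x hx
  have hK := hperf₁.precompact_le x (-1) (hP.point x hx).compact
  exact ⟨hP.le_zero_of_cogenerates hcog hx, hcog.ge_zero_of_mem tr hx hK⟩

end TV
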